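/- If X ⊆ 2^ω is contained in a μ-measure-zero set and |X| < 𝔟, then X can be covered by a μ-measure-zero set of type F_σ: there exists a countable union of closed sets G ⊆ 2^ω with μ(G) = 0 and X ⊆ G. -/

import Mathlib

open MeasureTheory Set Filter Cardinal

/-- `μ` is the uniform product ("fair coin") probability measure on Cantor space `2^ω`,
characterized by its values on cylinders. -/
def IsFairCoin (μ : Measure (ℕ → Bool)) : Prop :=
  ∀ (s : Finset ℕ) (σ : ℕ → Bool),
    μ {x : ℕ → Bool | ∀ i ∈ s, x i = σ i} = (1 / 2 : ENNReal) ^ s.card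

/-- The σ-ideal of μ-null sets. -/
def nullIdeal (μ : Measure (ℕ → Bool)) : Set (Set (ℕ → Bool)) := {A | μ A = 0}

/-- The σ-ideal of meager subsets of Cantor space. -/
def meagerIdeal : Set (Set (ℕ → Bool)) := {A | IsMeagre A}

/-- The σ-ideal generated by closed measure zero sets. -/
def closedNullIdeal (μ : Measure (ℕ → Bool)) : Set (Set (ℕ → Bool)) :=
  {A | ∃ F : ℕ → Set (ℕ → Bool), (∀ n, IsClosed (F n) ∧ μ (F n) = 0) ∧ A ⊆ ⋃ n, F n}

/-- `add(I, J)`: the least cardinality of a subfamily of `I` whose union is not in `J`. -/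
noncomputable def addIJ (I J : Set (Set (ℕ → Bool))) : Cardinal :=
  sInf {c : Cardinal | ∃ A : Set (Set (ℕ → Bool)), A ⊆ I ∧ ⋃₀ A ∉ J ∧ c = #A}

/-- `cov(J)`: the least cardinality of a subfamily of `J` covering the whole space. -/
noncomputable def covI (J : Set (Set (ℕ → Bool))) : Cardinal :=
  sInf {c : Cardinal | ∃ A : Set (Set (ℕ → Bool)), A ⊆ J ∧ ⋃₀ A = Set.univ ∧ c = #A}

/-- `unif(J)`: the least cardinality of a set of reals not in `J`. -/
noncomputable def unifI (J : Set (Set (ℕ → Bool))) : Cardinal :=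
  sInf {c : Cardinal | ∃ X : Set (ℕ → Bool), X ∉ J ∧ c = #X}

/-- `cof(I, J)`: the least cardinality of a subfamily of `J` cofinal over `I`. -/
noncomputable def cofIJ (I J : Set (Set (ℕ → Bool))) : Cardinal :=
  sInf {c : Cardinal | ∃ A : Set (Set (ℕ → Bool)), A ⊆ J ∧
    (∀ B ∈ I, ∃ C ∈ A, B ⊆ C) ∧ c = #A}

/-- The dominating number 𝔡. -/
noncomputable def frakD : Cardinal :=
  sInf {c : Cardinal | ∃ F : Set (ℕ → ℕ),
    (∀ g : ℕ → ℕ, ∃ f ∈ F, ∀ᶠ n in atTop, g n ≤ f n) ∧ c = #F}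

/-- The unbounding number 𝔟. -/
noncomputable def frakB : Cardinal :=
  sInf {c : Cardinal | ∃ F : Set (ℕ → ℕ),
    (∀ g : ℕ → ℕ, ∃ f ∈ F, ¬ ∀ᶠ n in atTop, f n ≤ g n) ∧ c = #F}

/-!
Cover the null set `X` by open sets `U m` with `μ (U m) < 1 / m` and write each `U m` as a
countable union of closed sets `D m k`. Every `x ∈ X` picks indices `f x m` with
`x ∈ D m (f x m)`; since `#X < 𝔟`, one function `g` eventually dominates all the `f x`. Hence `X`
lies in the union over `N` of the closed sets `⋂ m ≥ N, ⋃ k ≤ g m, D m k`, and each of these is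
contained in `U m` for all `m ≥ N`, so it is null.
-/

open scoped ENNReal

theorem IsFairCoin.isProbabilityMeasure {μ : Measure (ℕ → Bool)} (hμ : IsFairCoin μ) :
    IsProbabilityMeasure μ :=
  ⟨by simpa using hμ ∅ fun _ ↦ true⟩

theorem IsOpen.exists_eq_iUnion_isClosed {Ω : Type*} [TopologicalSpace Ω]
    [PerfectlyNormalSpace Ω] {U : Set Ω} (hU : IsOpen U) :
    ∃ F : ℕ → Set Ω, (∀ n, IsClosed (F n)) ∧ U = ⋃ n, F n := by
  obtain ⟨V, hV, hUV⟩ := hU.isClosed_compl.isGδ.eq_iInter_nat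
  refine ⟨fun n ↦ (V n)ᶜ, fun n ↦ (hV n).isClosed_compl, ?_⟩
  rw [← compl_iInter, ← hUV, compl_compl]

theorem exists_forall_eventually_le_of_mk_lt_frakB {ι : Type} (f : ι → ℕ → ℕ)
    (hf : #ι < frakB) :
    ∃ g : ℕ → ℕ, ∀ i, ∀ᶠ n in atTop, f i n ≤ g n := by
  by_contra hunbounded
  simp only [not_exists, not_forall] at hunbounded
  have hB : frakB ≤ #(range f) := csInf_le' ⟨range f, fun g ↦ ?_, rfl⟩
  · exact hf.not_ge (hB.trans mk_range_le)
  obtain ⟨i, hi⟩ := hunbounded g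
  exact ⟨f i, mem_range_self i, hi⟩

theorem exists_subset_iUnion_iInter_iUnion_le_of_mk_lt_frakB {α : Type} {X : Set α}
    (hX : #X < frakB) {D : ℕ → ℕ → Set α} (hD : ∀ m, X ⊆ ⋃ k, D m k) :
    ∃ g : ℕ → ℕ, X ⊆ ⋃ N, ⋂ m ≥ N, ⋃ k ≤ g m, D m k := by
  choose f hf using fun (x : X) m ↦ mem_iUnion.1 (hD m x.2)
  obtain ⟨g, hg⟩ := exists_forall_eventually_le_of_mk_lt_frakB f hX
  refine ⟨g, fun x hx ↦ ?_⟩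
  obtain ⟨N, hN⟩ := eventually_atTop.1 (hg ⟨x, hx⟩)
  exact mem_iUnion.2 ⟨N, mem_iInter₂.2 fun m hm ↦ mem_iUnion₂.2 ⟨_, hN m hm, hf _ m⟩⟩

theorem exists_isClosed_null_cover_of_mk_lt_frakB {Ω : Type} [TopologicalSpace Ω]
    [PerfectlyNormalSpace Ω] [MeasurableSpace Ω] (μ : Measure Ω) [μ.OuterRegular] {X : Set Ω}
    (hX : μ X = 0) (hcard : #X < frakB) :
    ∃ F : ℕ → Set Ω, (∀ n, IsClosed (F n) ∧ μ (F n) = 0) ∧ X ⊆ ⋃ n, F n := by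
  have hU (m : ℕ) : ∃ U ⊇ X, IsOpen U ∧ μ U < (m : ℝ≥0∞)⁻¹ :=
    X.exists_isOpen_lt_of_lt _ (hX ▸ ENNReal.inv_pos.2 (ENNReal.natCast_ne_top m))
  choose U hXU hUo hUμ using hU
  choose D hDc hUD using fun m ↦ (hUo m).exists_eq_iUnion_isClosed
  obtain ⟨g, hXg⟩ := exists_subset_iUnion_iInter_iUnion_le_of_mk_lt_frakB hcard
    fun m ↦ hUD m ▸ hXU m
  refine ⟨fun N ↦ ⋂ m ≥ N, ⋃ k ≤ g m, D m k, fun N ↦ ⟨?_, ?_⟩, hXg⟩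
  · exact isClosed_biInter fun m _ ↦ (finite_Iic (g m)).isClosed_biUnion fun k _ ↦ hDc m k
  · have hsub (m : ℕ) (hm : N ≤ m) : ⋂ m ≥ N, ⋃ k ≤ g m, D m k ⊆ U m :=
      (biInter_subset_of_mem hm).trans (hUD m ▸ iUnion₂_subset fun k _ ↦ subset_iUnion _ k)
    refine nonpos_iff_eq_zero.1 (ge_of_tendsto ENNReal.tendsto_inv_nat_nhds_zero ?_)
    exact eventually_atTop.2 ⟨N, fun m hm ↦ (measure_mono (hsub m hm)).trans (hUμ m).le⟩

theorem small_null_covered_by_Fsigma (μ : Measure (ℕ → Bool)) (hμ : IsFairCoin μ)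
    (X : Set (ℕ → Bool)) (hX : ∃ G : Set (ℕ → Bool), μ G = 0 ∧ X ⊆ G)
    (hcard : #X < frakB) :
    ∃ G : Set (ℕ → Bool),
      (∃ F : ℕ → Set (ℕ → Bool), (∀ n, IsClosed (F n)) ∧ G = ⋃ n, F n) ∧
      μ G = 0 ∧ X ⊆ G := by
  have := hμ.isProbabilityMeasure
  obtain ⟨G, hG, hXG⟩ := hX
  obtain ⟨F, hF, hXF⟩ :=
    exists_isClosed_null_cover_of_mk_lt_frakB μ (measure_mono_null hXG hG) hcard
  exact ⟨⋃ n, F n, ⟨F, fun n ↦ (hF n).1, rfl⟩, measure_iUnion_null fun n ↦ (hF n).2, hXF⟩
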